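/- Let a > 1, d ≥ 1, and 0 ≤ i < d. For the division transducer in base a by d (transitions i →(b/c) j iff i·a + b = c·d + j with digits b, c ∈ {0,…,a−1} and states in {0,…,d−1}), the relation realized by paths from state 0 to state r (0 ≤ r < d) is exactly { (u, v) : |u| = |v| and [u] = [v]·d + r }, where [w] is the base-a value of w with most significant digit first. -/

import Mathlib

/-- Path of the division-by-`d` transducer in base `a`. -/
def DivPath (a d : ℕ) : ℕ → List ℕ → List ℕ → ℕ → Prop
  | i, [], [], j => i = j
  | i, b :: u, c :: v, j => ∃ k, i * a + b = c * d + k ∧ DivPath a d k u v j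
  | _, _, _, _ => False

/-- Base-`a` value, most significant digit first. -/
def msbVal (a : ℕ) : List ℕ → ℕ
  | [] => 0
  | c :: w => c * a ^ w.length + msbVal a w

/-!
A path `i → j` reading `(u, v)` is long division of `i·a^|u| + [u]` by `d`: the invariant
`i·a^|u| + [u] = [v]·d + j` is preserved by each transition `i·a + b = c·d + k`. Conversely, given
the invariant, the first output digit `c` and the next state `k < d` are forced, because
`[u] < a^|u|` and `[v]·d + j < d·a^|v|` when the digits are below `a` and `j < d`.
-/

theorem msbVal_lt_pow {a : ℕ} {w : List ℕ} (hw : ∀ x ∈ w, x < a) :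
    msbVal a w < a ^ w.length := by
  induction w with
  | nil => simp [msbVal]
  | cons c w ih =>
    have hc : c + 1 ≤ a := hw c List.mem_cons_self
    have hrest : msbVal a w < a ^ w.length := ih fun x hx => hw x (List.mem_cons_of_mem c hx)
    calc msbVal a (c :: w) = c * a ^ w.length + msbVal a w := rfl
      _ < (c + 1) * a ^ w.length := by linarith
      _ ≤ a * a ^ w.length := Nat.mul_le_mul_right _ hc
      _ = a ^ (c :: w).length := by rw [List.length_cons, pow_succ']

theorem exists_lt_of_mul_add_eq {N x y U W d : ℕ} (hU : U < N) (hW : W < d * N)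
    (h : x * N + U = y * N + W) : ∃ k < d, x = y + k ∧ k * N + U = W := by
  have hyx : y ≤ x := by
    by_contra! hxy
    nlinarith
  obtain ⟨k, rfl⟩ := Nat.exists_eq_add_of_le hyx
  have hk : k * N + U = W := by linarith [add_mul y k N]
  exact ⟨k, Nat.lt_of_mul_lt_mul_right (by linarith : k * N < d * N), rfl, hk⟩

namespace DivPath

variable {a d : ℕ}

theorem length_eq_and_value_eq {i j : ℕ} {u v : List ℕ} (h : DivPath a d i u v j) :
    u.length = v.length ∧ i * a ^ u.length + msbVal a u = msbVal a v * d + j := by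
  induction u generalizing v i with
  | nil =>
    cases v with
    | nil => simpa [DivPath, msbVal] using h
    | cons c v => exact h.elim
  | cons b u ih =>
    cases v with
    | nil => exact h.elim
    | cons c v =>
      obtain ⟨k, hstep, hpath⟩ := h
      obtain ⟨hlen, hval⟩ := ih hpath
      refine ⟨by simp [hlen], ?_⟩
      simp only [msbVal, List.length_cons, pow_succ, ← hlen]
      calc i * (a ^ u.length * a) + (b * a ^ u.length + msbVal a u)
          = (i * a + b) * a ^ u.length + msbVal a u := by ring
        _ = (c * d + k) * a ^ u.length + msbVal a u := by rw [hstep]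
        _ = (c * a ^ u.length + msbVal a v) * d + j := by rw [add_mul, add_assoc, hval]; ring

theorem of_value_eq {i j : ℕ} {u v : List ℕ} (hi : i < d) (hj : j < d)
    (hu : ∀ x ∈ u, x < a) (hv : ∀ x ∈ v, x < a) (hlen : u.length = v.length)
    (hval : i * a ^ u.length + msbVal a u = msbVal a v * d + j) : DivPath a d i u v j := by
  induction u generalizing v i with
  | nil =>
    cases v with
    | nil => simpa [DivPath, msbVal] using hval
    | cons c v => simp at hlen
  | cons b u ih =>
    cases v with
    | nil => simp at hlen
    | cons c v =>
      have hlen' : u.length = v.length := by simpa using hlen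
      have hu' : ∀ x ∈ u, x < a := fun x hx => hu x (List.mem_cons_of_mem b hx)
      have hv' : ∀ x ∈ v, x < a := fun x hx => hv x (List.mem_cons_of_mem c hx)
      have hU : msbVal a u < a ^ u.length := msbVal_lt_pow hu'
      have hW : msbVal a v * d + j < d * a ^ u.length := by
        have hV : msbVal a v + 1 ≤ a ^ u.length := hlen' ▸ msbVal_lt_pow hv'
        nlinarith
      have hsplit : (i * a + b) * a ^ u.length + msbVal a u
          = (c * d) * a ^ u.length + (msbVal a v * d + j) := by
        simp only [msbVal, List.length_cons, pow_succ, ← hlen'] at hval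
        linarith
      obtain ⟨k, hk, hstep, hrest⟩ := exists_lt_of_mul_add_eq hU hW hsplit
      exact ⟨k, hstep, ih hk hu' hv' hlen' hrest⟩

end DivPath

theorem divPath_from_zero_iff_general (a d r : ℕ) (hr : r < d)
    (u v : List ℕ) (hu : ∀ x ∈ u, x < a) (hv : ∀ x ∈ v, x < a) :
    DivPath a d 0 u v r ↔ u.length = v.length ∧ msbVal a u = msbVal a v * d + r := by
  constructor
  · intro h
    simpa using h.length_eq_and_value_eq
  · rintro ⟨hlen, hval⟩
    exact DivPath.of_value_eq (Nat.zero_lt_of_lt hr) hr hu hv hlen (by simpa using hval)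

theorem divPath_from_zero_iff (a d r : ℕ) (ha : 1 < a) (hd : 1 ≤ d) (hr : r < d)
    (u v : List ℕ) (hu : ∀ x ∈ u, x < a) (hv : ∀ x ∈ v, x < a) :
    DivPath a d 0 u v r ↔ u.length = v.length ∧ msbVal a u = msbVal a v * d + r :=
  divPath_from_zero_iff_general a d r hr u v hu hv
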